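/- arXiv:1010.5951 — 6 statements merged into one kernel-verified Lean document; each statement's English description precedes it below -/
import Mathlib

section
/- Let (R, C, M_R, M_C) be a win-lose bimatrix game, and let S_R ⊆ R and S_C ⊆ C be nonempty sets such that: every r ∈ S_R has exactly one c ∈ S_C with M_R(r,c) = 1 and exactly one c ∈ S_C with M_C(r,c) = 1; every c ∈ S_C has exactly one r ∈ S_R with M_C(r,c) = 1 and exactly one r ∈ S_R with M_R(r,c) = 1; every r ∈ R∖S_R has at most one c ∈ S_C with M_R(r,c) = 1; and every c ∈ C∖S_C has at most one r ∈ S_R with M_C(r,c) = 1. Then the pair consisting of the uniform distribution on S_R and the uniform distribution on S_C is a Nash equilibrium of the game. -/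
open Finset in
/-- `x` is a mixed strategy: a probability distribution on the finite strategy set `S`. -/
def IsMixed {S : Type*} [Fintype S] (x : S → ℝ) : Prop :=
  (∀ s, 0 ≤ x s) ∧ ∑ s, x s = 1

open Finset in
/-- `(x, y)` is a Nash equilibrium of the bimatrix game `(MR, MC)`. -/
def IsNash {R C : Type*} [Fintype R] [Fintype C]
    (MR MC : R → C → ℝ) (x : R → ℝ) (y : C → ℝ) : Prop :=
  IsMixed x ∧ IsMixed y ∧
  (∀ x' : R → ℝ, IsMixed x' →
    ∑ r, ∑ c, x' r * MR r c * y c ≤ ∑ r, ∑ c, x r * MR r c * y c) ∧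
  (∀ y' : C → ℝ, IsMixed y' →
    ∑ r, ∑ c, x r * MC r c * y' c ≤ ∑ r, ∑ c, x r * MC r c * y c)

/-!
A row of `S_R` wins against exactly one column of `S_C` and no other row wins against more
than one, so against the uniform strategy on `S_C` every pure row strategy earns at most
`1 / |S_C|`, and every row of `S_R` earns exactly that: the uniform strategy on `S_R` is a
best response. The column player's side is the same argument for the transposed matrix `M_Cᵀ`.
-/

open Finset Matrix

section ZeroOne

variable {α M : Type*} {T : Finset α} {f : α → M}

theorem Finset.sum_eq_one_of_zero_one [AddCommMonoid M] [One M]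
    (h01 : ∀ a, f a = 0 ∨ f a = 1) {a : α} (ha : a ∈ T) (hfa : f a = 1)
    (huniq : ∀ b ∈ T, f b = 1 → b = a) :
    ∑ t ∈ T, f t = 1 := by
  rw [sum_eq_single_of_mem a ha fun b hb hne => (h01 b).resolve_right (hne ∘ huniq b hb), hfa]

theorem Finset.sum_le_one_of_zero_one [AddCommMonoidWithOne M] [PartialOrder M]
    [ZeroLEOneClass M] (h01 : ∀ a, f a = 0 ∨ f a = 1)
    (huniq : ∀ a ∈ T, ∀ b ∈ T, f a = 1 → f b = 1 → a = b) :
    ∑ t ∈ T, f t ≤ 1 := by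
  by_cases h : ∃ a ∈ T, f a = 1
  · obtain ⟨a, ha, hfa⟩ := h
    exact (sum_eq_one_of_zero_one h01 ha hfa fun b hb hfb => huniq b hb a ha hfb hfa).le
  · push Not at h
    rw [sum_eq_zero fun a ha => (h01 a).resolve_right (h a ha)]
    exact zero_le_one

end ZeroOne

section Strategies

variable {R C : Type*} [Fintype R] [Fintype C]

theorem sum_sum_mul_mul_eq_dotProduct_mulVec (x : R → ℝ) (M : Matrix R C ℝ) (y : C → ℝ) :
    ∑ r, ∑ c, x r * M r c * y c = x ⬝ᵥ (M *ᵥ y) := by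
  simp only [dotProduct, mulVec, mul_sum, mul_assoc]

theorem sum_sum_mul_mul_eq_dotProduct_transpose_mulVec (x : R → ℝ) (M : Matrix R C ℝ)
    (y : C → ℝ) :
    ∑ r, ∑ c, x r * M r c * y c = y ⬝ᵥ (Mᵀ *ᵥ x) := by
  rw [sum_sum_mul_mul_eq_dotProduct_mulVec, dotProduct_mulVec, dotProduct_comm,
    mulVec_transpose]

theorem isNash_iff_dotProduct (MR MC : Matrix R C ℝ) (x : R → ℝ) (y : C → ℝ) :
    IsNash MR MC x y ↔ IsMixed x ∧ IsMixed y ∧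
      (∀ x', IsMixed x' → x' ⬝ᵥ (MR *ᵥ y) ≤ x ⬝ᵥ (MR *ᵥ y)) ∧
      (∀ y', IsMixed y' →
        y' ⬝ᵥ (MCᵀ *ᵥ x) ≤ y ⬝ᵥ (MCᵀ *ᵥ x)) := by
  simp only [IsNash, sum_sum_mul_mul_eq_dotProduct_mulVec _ MR,
    sum_sum_mul_mul_eq_dotProduct_transpose_mulVec x MC]

theorem IsMixed.dotProduct_le {x u : R → ℝ} {v : ℝ} (hx : IsMixed x) (hu : ∀ r, u r ≤ v) :
    x ⬝ᵥ u ≤ v :=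
  calc x ⬝ᵥ u ≤ ∑ r, x r * v := sum_le_sum fun r _ => mul_le_mul_of_nonneg_left (hu r) (hx.1 r)
    _ = v := by rw [← sum_mul, hx.2, one_mul]

end Strategies

section Uniform

variable {α : Type*} [Fintype α] [DecidableEq α]

noncomputable def uniformStrategy (S : Finset α) (a : α) : ℝ :=
  if a ∈ S then (#S : ℝ)⁻¹ else 0

theorem uniformStrategy_dotProduct (S : Finset α) (u : α → ℝ) :
    uniformStrategy S ⬝ᵥ u = (#S : ℝ)⁻¹ * ∑ a ∈ S, u a := by
  simp only [dotProduct, uniformStrategy, ite_mul, zero_mul, sum_ite_mem, univ_inter, mul_sum]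

theorem uniformStrategy_dotProduct_of_eqOn {S : Finset α} (hS : S.Nonempty) {u : α → ℝ}
    {v : ℝ} (hSu : ∀ a ∈ S, u a = v) :
    uniformStrategy S ⬝ᵥ u = v := by
  rw [uniformStrategy_dotProduct, sum_congr rfl hSu, sum_const, nsmul_eq_mul, ← mul_assoc,
    inv_mul_cancel₀ (by exact_mod_cast hS.card_pos.ne'), one_mul]

theorem isMixed_uniformStrategy {S : Finset α} (hS : S.Nonempty) :
    IsMixed (uniformStrategy S) := by
  refine ⟨fun a => ?_, ?_⟩
  · unfold uniformStrategy
    split_ifs <;> positivity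
  · rw [← dotProduct_one]
    exact uniformStrategy_dotProduct_of_eqOn hS fun _ _ => rfl

variable {β : Type*}

theorem mulVec_uniformStrategy (M : Matrix β α ℝ) (S : Finset α) (b : β) :
    (M *ᵥ uniformStrategy S) b = (#S : ℝ)⁻¹ * ∑ a ∈ S, M b a := by
  rw [mulVec, dotProduct_comm, uniformStrategy_dotProduct]

theorem uniformStrategy_isBestResponse [Fintype β] [DecidableEq β] (M : Matrix β α ℝ)
    {SR : Finset β} {SC : Finset α} (hSR : SR.Nonempty) (hle : ∀ r, ∑ c ∈ SC, M r c ≤ 1)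
    (heq : ∀ r ∈ SR, ∑ c ∈ SC, M r c = 1) {x : β → ℝ} (hx : IsMixed x) :
    x ⬝ᵥ (M *ᵥ uniformStrategy SC) ≤ uniformStrategy SR ⬝ᵥ (M *ᵥ uniformStrategy SC) := by
  rw [uniformStrategy_dotProduct_of_eqOn hSR (v := (#SC : ℝ)⁻¹) fun r hr => by
    rw [mulVec_uniformStrategy, heq r hr, mul_one]]
  refine hx.dotProduct_le fun r => ?_
  rw [mulVec_uniformStrategy]
  exact mul_le_of_le_one_right (by positivity) (hle r)

end Uniform

open Finset in
theorem uniform_on_undominated_cycle_is_nash_general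
    {R C : Type*} [Fintype R] [Fintype C] [DecidableEq R] [DecidableEq C]
    (MR MC : R → C → ℝ)
    (h01R : ∀ r c, MR r c = 0 ∨ MR r c = 1)
    (h01C : ∀ r c, MC r c = 0 ∨ MC r c = 1)
    (SR : Finset R) (SC : Finset C) (hSR : SR.Nonempty) (hSC : SC.Nonempty)
    (hrow_out : ∀ r ∈ SR, ∃! c, c ∈ SC ∧ MR r c = 1)
    (hcol_out : ∀ c ∈ SC, ∃! r, r ∈ SR ∧ MC r c = 1)
    (hrow_dom : ∀ r ∉ SR, ∀ c1 ∈ SC, ∀ c2 ∈ SC, MR r c1 = 1 → MR r c2 = 1 → c1 = c2)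
    (hcol_dom : ∀ c ∉ SC, ∀ r1 ∈ SR, ∀ r2 ∈ SR, MC r1 c = 1 → MC r2 c = 1 → r1 = r2) :
    IsNash MR MC (fun r => if r ∈ SR then ((SR.card : ℝ))⁻¹ else 0)
      (fun c => if c ∈ SC then ((SC.card : ℝ))⁻¹ else 0) := by
  have hrow_eq : ∀ r ∈ SR, ∑ c ∈ SC, MR r c = 1 := fun r hr => by
    obtain ⟨c, ⟨hc, hrc⟩, huniq⟩ := hrow_out r hr
    exact sum_eq_one_of_zero_one (h01R r) hc hrc fun c' hc' h => huniq c' ⟨hc', h⟩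
  have hcol_eq : ∀ c ∈ SC, ∑ r ∈ SR, MC r c = 1 := fun c hc => by
    obtain ⟨r, ⟨hr, hrc⟩, huniq⟩ := hcol_out c hc
    exact sum_eq_one_of_zero_one (h01C · c) hr hrc fun r' hr' h => huniq r' ⟨hr', h⟩
  have hrow_le : ∀ r, ∑ c ∈ SC, MR r c ≤ 1 := fun r => by
    by_cases hr : r ∈ SR
    · exact (hrow_eq r hr).le
    · exact sum_le_one_of_zero_one (h01R r) (hrow_dom r hr)
  have hcol_le : ∀ c, ∑ r ∈ SR, MC r c ≤ 1 := fun c => by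
    by_cases hc : c ∈ SC
    · exact (hcol_eq c hc).le
    · exact sum_le_one_of_zero_one (h01C · c) (hcol_dom c hc)
  exact (isNash_iff_dotProduct MR MC (uniformStrategy SR) (uniformStrategy SC)).2
    ⟨isMixed_uniformStrategy hSR, isMixed_uniformStrategy hSC,
      fun _ hx => uniformStrategy_isBestResponse MR hSR hrow_le hrow_eq hx,
      fun _ hy => uniformStrategy_isBestResponse (MC : Matrix R C ℝ)ᵀ hSC hcol_le hcol_eq hy⟩

open Finset in
/-- If `S_R`, `S_C` induce an undominated induced directed cycle structure in the
digraph associated to a win-lose bimatrix game, then the pair of uniform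
distributions on `S_R` and `S_C` is a Nash equilibrium. -/
theorem uniform_on_undominated_cycle_is_nash
    {R C : Type*} [Fintype R] [Fintype C] [DecidableEq R] [DecidableEq C]
    [Nonempty R] [Nonempty C]
    (MR MC : R → C → ℝ)
    (h01R : ∀ r c, MR r c = 0 ∨ MR r c = 1)
    (h01C : ∀ r c, MC r c = 0 ∨ MC r c = 1)
    (SR : Finset R) (SC : Finset C) (hSR : SR.Nonempty) (hSC : SC.Nonempty)
    (hrow_out : ∀ r ∈ SR, ∃! c, c ∈ SC ∧ MR r c = 1)
    (hrow_in : ∀ r ∈ SR, ∃! c, c ∈ SC ∧ MC r c = 1)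
    (hcol_out : ∀ c ∈ SC, ∃! r, r ∈ SR ∧ MC r c = 1)
    (hcol_in : ∀ c ∈ SC, ∃! r, r ∈ SR ∧ MR r c = 1)
    (hrow_dom : ∀ r ∉ SR, ∀ c1 ∈ SC, ∀ c2 ∈ SC, MR r c1 = 1 → MR r c2 = 1 → c1 = c2)
    (hcol_dom : ∀ c ∉ SC, ∀ r1 ∈ SR, ∀ r2 ∈ SR, MC r1 c = 1 → MC r2 c = 1 → r1 = r2) :
    IsNash MR MC (fun r => if r ∈ SR then ((SR.card : ℝ))⁻¹ else 0)
      (fun c => if c ∈ SC then ((SC.card : ℝ))⁻¹ else 0) :=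
  uniform_on_undominated_cycle_is_nash_general MR MC h01R h01C SR SC hSR hSC hrow_out hcol_out
    hrow_dom hcol_dom
end

section
/- Let G = (V, E) be a digraph, let u ≠ v be vertices with no arc between u and v in either direction, and let A, B ⊆ V be sets with A ∪ B = V, A ∩ B = {u, v}, and no arcs in either direction between A∖{u,v} and B∖{u,v}. Let G1 be the digraph on A whose arcs are the arcs of E between vertices of A together with the extra arc (u, v), and let G2 be the digraph on B whose arcs are the arcs of E between vertices of B together with the extra arc (v, u). Suppose O1 is a directed cycle of G1 that passes through the arc (u, v) and is induced and undominated in G1, and O2 is a directed cycle of G2 that passes through the arc (v, u) and is induced and undominated in G2. Then the directed cycle of G obtained by deleting the arcs (u, v) and (v, u) and concatenating O1 and O2 (following O1 from v to u inside A and then O2 from u to v inside B) is an induced and undominated directed cycle of G. -/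
/-!
Cut each cycle open at its extra arc: `f1` read from `v` becomes a path `v ⇝ u` in `A`, and `f2`
read from `u` a path `u ⇝ v` in `B`. Their concatenation, indexed by `ℕ` and read modulo
`k1 + k2 - 2`, is the stitched cycle; it is injective because the two paths meet only in their
common endpoints `u` and `v`, each of which the concatenation visits once. Since `{u, v}` separates
`A` from `B`, an arc of `E` between two vertices of the stitched cycle, or from an outside vertex
into it, stays inside one side, where the induced (resp. undominated) property of `f1` or `f2`
applies; the extra arcs `(u, v)` and `(v, u)` never interfere because they are not arcs of `E`.
-/

/-- A directed cycle of length `k` in the digraph `E`. -/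

def IsDirCycle {V : Type*} (E : V → V → Prop) (k : ℕ) (f : ZMod k → V) : Prop :=
  3 ≤ k ∧ Function.Injective f ∧ ∀ t : ZMod k, E (f t) (f (t + 1))

/-- The cycle `f` is induced: the only arcs between vertices of the cycle are the
consecutive arcs `f t → f (t+1)`. -/

def IsInducedDirCycle {V : Type*} (E : V → V → Prop) (k : ℕ) (f : ZMod k → V) : Prop :=
  ∀ s t : ZMod k, E (f s) (f t) → t = s + 1

/-- The cycle `f` is undominated: no vertex `u` outside the cycle has arcs to two
distinct vertices of the cycle. -/

def IsUndominatedDirCycle {V : Type*} (E : V → V → Prop) (k : ℕ) (f : ZMod k → V) : Prop :=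
  ∀ u : V, u ∉ Set.range f → ¬ ∃ s t : ZMod k, f s ≠ f t ∧ E u (f s) ∧ E u (f t)

open Set Function

section

variable {V : Type*}

def cycleArcs {k : ℕ} (f : ZMod k → V) : Set (V × V) := {p | ∃ t : ZMod k, p = (f t, f (t + 1))}

def stepArcs (q : ℕ → V) (n : ℕ) : Set (V × V) := (fun i => (q i, q (i + 1))) '' Iio n

lemma image_Iio_eq_insert {α : Type*} (q : ℕ → α) {n : ℕ} (hn : n ≠ 0) :
    q '' Iio n = insert (q (n - 1)) (q '' Iio (n - 1)) := by
  obtain ⟨m, rfl⟩ := Nat.exists_eq_succ_of_ne_zero hn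
  rw [Nat.succ_sub_one, ← image_insert_eq, ← Order.Iio_succ_eq_insert]
  rfl

lemma injOn_add_natCast {k : ℕ} {f : ZMod k → V} (hf : Injective f) (c : ZMod k) :
    InjOn (fun i : ℕ => f (c + i)) (Iio k) := fun i hi j hj hij => by
  have := congrArg ZMod.val (add_left_cancel (hf hij))
  rwa [ZMod.val_natCast_of_lt hi, ZMod.val_natCast_of_lt hj] at this

section Rotation
variable {k : ℕ} [NeZero k]

lemma exists_add_natCast_eq (c t : ZMod k) : ∃ i < k, c + (i : ZMod k) = t :=
  ⟨(t - c).val, ZMod.val_lt _, by rw [ZMod.natCast_zmod_val, add_sub_cancel]⟩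

lemma range_eq_image_Iio (f : ZMod k → V) (c : ZMod k) :
    range f = (fun i : ℕ => f (c + i)) '' Iio k := by
  refine Subset.antisymm ?_ (image_subset_iff.2 fun i _ => mem_range_self _)
  rintro _ ⟨t, rfl⟩
  obtain ⟨i, hi, rfl⟩ := exists_add_natCast_eq c t
  exact ⟨i, hi, rfl⟩

lemma cycleArcs_eq_stepArcs (f : ZMod k → V) (c : ZMod k) :
    cycleArcs f = stepArcs (fun i : ℕ => f (c + i)) k := by
  ext p
  constructor
  · rintro ⟨t, rfl⟩
    obtain ⟨i, hi, rfl⟩ := exists_add_natCast_eq c t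
    exact ⟨i, hi, by push_cast [add_assoc]; rfl⟩
  · rintro ⟨i, -, rfl⟩
    exact ⟨c + i, by push_cast [add_assoc]; rfl⟩

lemma ZMod.add_one_add_natCast_sub_one (t : ZMod k) : t + 1 + ((k - 1 : ℕ) : ZMod k) = t := by
  rw [Nat.cast_sub NeZero.one_le, ZMod.natCast_self, Nat.cast_one]
  ring

lemma apply_add_one_add_natCast_ne {f : ZMod k → V} (hf : Injective f) (t : ZMod k) {i : ℕ}
    (hi : i < k - 1) : f (t + 1 + i) ≠ f t := fun h => by
  have hlast := congrArg f (ZMod.add_one_add_natCast_sub_one t)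
  have := injOn_add_natCast hf (t + 1) (mem_Iio.2 (by omega : i < k))
    (mem_Iio.2 (by omega : k - 1 < k)) (h.trans hlast.symm)
  omega

lemma cycleArcs_diff_singleton {f : ZMod k → V} (hf : Injective f) (t : ZMod k) :
    cycleArcs f \ {(f t, f (t + 1))} = stepArcs (fun i : ℕ => f (t + 1 + i)) (k - 1) := by
  have hlast : (f (t + 1 + (k - 1 : ℕ)), f (t + 1 + (k : ℕ))) = (f t, f (t + 1)) := by
    rw [ZMod.add_one_add_natCast_sub_one, ZMod.natCast_self, add_zero]
  have hnotMem : (f t, f (t + 1)) ∉ stepArcs (fun i : ℕ => f (t + 1 + i)) (k - 1) :=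
    fun ⟨i, hi, hq⟩ => apply_add_one_add_natCast_ne hf t hi (congrArg Prod.fst hq)
  rw [cycleArcs_eq_stepArcs f (t + 1), stepArcs, image_Iio_eq_insert _ (NeZero.ne k),
    Nat.sub_add_cancel NeZero.one_le, hlast, ← stepArcs, insert_sdiff_self_of_notMem hnotMem]

lemma range_eq_insert_image_Iio (f : ZMod k → V) (t : ZMod k) :
    range f = insert (f t) ((fun i : ℕ => f (t + 1 + i)) '' Iio (k - 1)) := by
  rw [range_eq_image_Iio f (t + 1), image_Iio_eq_insert _ (NeZero.ne k),
    ZMod.add_one_add_natCast_sub_one]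

end Rotation

section Concat
variable {α : Type*}

def concatSeq (m : ℕ) (p q : ℕ → α) : ℕ → α := fun i => if i < m then p i else q (i - m)

lemma image_concatSeq (m n : ℕ) (p q : ℕ → α) :
    concatSeq m p q '' Iio (m + n) = p '' Iio m ∪ q '' Iio n := by
  ext x
  constructor
  · rintro ⟨i, hi, rfl⟩
    by_cases him : i < m
    · exact Or.inl ⟨i, him, (if_pos him).symm⟩
    · exact Or.inr ⟨i - m, by simp only [mem_Iio] at hi ⊢; omega, (if_neg him).symm⟩
  · rintro (⟨i, hi, rfl⟩ | ⟨j, hj, rfl⟩)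
    · exact ⟨i, by simp only [mem_Iio] at hi ⊢; omega, if_pos hi⟩
    · exact ⟨m + j, by simp only [mem_Iio] at hj ⊢; omega, by simp [concatSeq]⟩

lemma stepArcs_concatSeq {m : ℕ} (n : ℕ) {p q : ℕ → α} (hpq : p m = q 0) :
    stepArcs (concatSeq m p q) (m + n) = stepArcs p m ∪ stepArcs q n := by
  have hsteps : (fun i => (concatSeq m p q i, concatSeq m p q (i + 1))) =
      concatSeq m (fun i => (p i, p (i + 1))) (fun j => (q j, q (j + 1))) := by
    funext i
    simp only [concatSeq]
    split_ifs
    · rfl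
    · rw [show i + 1 - m = 0 by omega, ← hpq, show i + 1 = m by omega]
    · omega
    · rw [show i + 1 - m = i - m + 1 by omega]
  rw [stepArcs, hsteps, image_concatSeq]
  rfl

lemma injOn_concatSeq {m n : ℕ} {p q : ℕ → α} (hp : InjOn p (Iio m)) (hq : InjOn q (Iio n))
    (hpq : ∀ i < m, ∀ j < n, p i ≠ q j) : InjOn (concatSeq m p q) (Iio (m + n)) := by
  intro i hi j hj hij
  simp only [mem_Iio] at hi hj
  simp only [concatSeq] at hij
  split_ifs at hij with hi' hj' hj'
  · exact hp hi' hj' hij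
  · exact absurd hij (hpq i hi' (j - m) (by omega))
  · exact absurd hij.symm (hpq j hj' (i - m) (by omega))
  · have := hq (mem_Iio.2 (by omega : i - m < n)) (mem_Iio.2 (by omega : j - m < n)) hij
    omega

end Concat

section NatIndexed
variable {k : ℕ} [NeZero k]

lemma range_comp_val (p : ℕ → V) : range (fun x : ZMod k => p x.val) = p '' Iio k := by
  ext a
  constructor
  · rintro ⟨x, rfl⟩
    exact ⟨x.val, x.val_lt, rfl⟩
  · rintro ⟨i, hi, rfl⟩
    exact ⟨i, congrArg p (ZMod.val_natCast_of_lt hi)⟩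

lemma comp_val_add_one {p : ℕ → V} (hp : p k = p 0) (t : ZMod k) :
    p (t + 1).val = p (t.val + 1) := by
  have hcast : ((t.val + 1 : ℕ) : ZMod k) = t + 1 := by push_cast [ZMod.natCast_zmod_val]; rfl
  obtain hlt | heq : t.val + 1 < k ∨ t.val + 1 = k := by have := t.val_lt; omega
  · rw [← hcast, ZMod.val_natCast_of_lt hlt]
  · rw [← hcast, heq, ZMod.natCast_self, ZMod.val_zero, hp]

lemma cycleArcs_comp_val {p : ℕ → V} (hp : p k = p 0) :
    cycleArcs (fun x : ZMod k => p x.val) = stepArcs p k := by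
  ext a
  constructor
  · rintro ⟨t, rfl⟩
    exact ⟨t.val, t.val_lt, by simp only [comp_val_add_one hp]⟩
  · rintro ⟨i, hi, rfl⟩
    refine ⟨i, ?_⟩
    simp only [comp_val_add_one hp, ZMod.val_natCast_of_lt hi]

lemma injective_comp_val {p : ℕ → V} (hp : InjOn p (Iio k)) :
    Injective (fun x : ZMod k => p x.val) := fun x y hxy =>
  ZMod.val_injective k (hp x.val_lt y.val_lt hxy)

end NatIndexed

theorem exists_splice_cycles {k₁ k₂ : ℕ} {u v : V} {g₁ : ZMod k₁ → V} {g₂ : ZMod k₂ → V}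
    (hk₁ : 2 ≤ k₁) (hk₂ : 2 ≤ k₂) (hg₁ : Injective g₁) (hg₂ : Injective g₂)
    {t₁ : ZMod k₁} {t₂ : ZMod k₂} (ht₁ : g₁ t₁ = u) (ht₁' : g₁ (t₁ + 1) = v)
    (ht₂ : g₂ t₂ = v) (ht₂' : g₂ (t₂ + 1) = u) (hmeet : range g₁ ∩ range g₂ ⊆ {u, v}) :
    ∃ f : ZMod (k₁ - 1 + (k₂ - 1)) → V, Injective f ∧ range f = range g₁ ∪ range g₂ ∧
      cycleArcs f = cycleArcs g₁ \ {(u, v)} ∪ cycleArcs g₂ \ {(v, u)} := by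
  have : NeZero k₁ := ⟨by omega⟩
  have : NeZero k₂ := ⟨by omega⟩
  have : NeZero (k₁ - 1 + (k₂ - 1)) := ⟨by omega⟩
  set q₁ : ℕ → V := fun i => g₁ (t₁ + 1 + i)
  set q₂ : ℕ → V := fun j => g₂ (t₂ + 1 + j)
  have hq₁_last : q₁ (k₁ - 1) = u := by simp only [q₁, ZMod.add_one_add_natCast_sub_one, ht₁]
  have hq₂_last : q₂ (k₂ - 1) = v := by simp only [q₂, ZMod.add_one_add_natCast_sub_one, ht₂]
  have hq₁_zero : q₁ 0 = v := by simpa [q₁] using ht₁'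
  have hq₂_zero : q₂ 0 = u := by simpa [q₂] using ht₂'
  have hdisj : ∀ i < k₁ - 1, ∀ j < k₂ - 1, q₁ i ≠ q₂ j := by
    intro i hi j hj hij
    have hmem : q₁ i ∈ range g₁ ∩ range g₂ := ⟨mem_range_self _, hij ▸ mem_range_self _⟩
    rcases hmeet hmem with hu | hv
    · exact apply_add_one_add_natCast_ne hg₁ t₁ hi (hu.trans ht₁.symm)
    · exact apply_add_one_add_natCast_ne hg₂ t₂ hj ((hij.symm.trans hv).trans ht₂.symm)
  have hclosed : concatSeq (k₁ - 1) q₁ q₂ (k₁ - 1 + (k₂ - 1)) = concatSeq (k₁ - 1) q₁ q₂ 0 := by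
    simp only [concatSeq, add_tsub_cancel_left]
    rw [if_neg (by omega), if_pos (by omega), hq₂_last, hq₁_zero]
  refine ⟨fun x => concatSeq (k₁ - 1) q₁ q₂ x.val,
    injective_comp_val (injOn_concatSeq
      ((injOn_add_natCast hg₁ _).mono (Iio_subset_Iio (Nat.sub_le _ _)))
      ((injOn_add_natCast hg₂ _).mono (Iio_subset_Iio (Nat.sub_le _ _))) hdisj), ?_, ?_⟩
  · have hu₂ : u ∈ q₂ '' Iio (k₂ - 1) := ⟨0, mem_Iio.2 (by omega), hq₂_zero⟩
    have hv₁ : v ∈ q₁ '' Iio (k₁ - 1) := ⟨0, mem_Iio.2 (by omega), hq₁_zero⟩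
    rw [range_comp_val, image_concatSeq, range_eq_insert_image_Iio g₁ t₁,
      range_eq_insert_image_Iio g₂ t₂, ht₁, ht₂, insert_union, union_insert,
      insert_eq_of_mem (mem_union_left _ hv₁), insert_eq_of_mem (mem_union_right _ hu₂)]
  · have h₁ := cycleArcs_diff_singleton hg₁ t₁
    have h₂ := cycleArcs_diff_singleton hg₂ t₂
    rw [ht₁, ht₁'] at h₁
    rw [ht₂, ht₂'] at h₂
    rw [cycleArcs_comp_val hclosed, stepArcs_concatSeq _ (hq₁_last.trans hq₂_zero.symm), h₁, h₂]

def Separates (E : V → V → Prop) (S A B : Set V) : Prop :=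
  ∀ a ∈ A \ S, ∀ b ∈ B \ S, ¬ E a b ∧ ¬ E b a

namespace Separates
variable {E : V → V → Prop} {S A B R₁ R₂ : Set V}

lemma symm (h : Separates E S A B) : Separates E S B A :=
  fun b hb a ha => (h a ha b hb).symm

lemma mem_of_adj (h : Separates E S A B) (hS : S ⊆ R₁) (hR₂ : R₂ ⊆ B) {w b : V} (hw : w ∈ A \ S)
    (hb : b ∈ R₁ ∪ R₂) (hadj : E w b ∨ E b w) : b ∈ R₁ := by
  rcases hb with hb | hb
  · exact hb
  · by_contra hb₁
    have := h w hw b ⟨hR₂ hb, fun hbS => hb₁ (hS hbS)⟩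
    exact hadj.elim this.1 this.2

lemma adj_mem_same_side (h : Separates E S A B) (hR₁ : R₁ ⊆ A) (hR₂ : R₂ ⊆ B) (hS₁ : S ⊆ R₁)
    (hS₂ : S ⊆ R₂) {a b : V} (ha : a ∈ R₁ ∪ R₂) (hb : b ∈ R₁ ∪ R₂) (hab : E a b) :
    (a ∈ R₁ ∧ b ∈ R₁) ∨ (a ∈ R₂ ∧ b ∈ R₂) := by
  by_cases haS : a ∈ S
  · rcases hb with hb | hb
    · exact Or.inl ⟨hS₁ haS, hb⟩
    · exact Or.inr ⟨hS₂ haS, hb⟩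
  rcases ha with ha | ha
  · exact Or.inl ⟨ha, h.mem_of_adj hS₁ hR₂ ⟨hR₁ ha, haS⟩ hb (Or.inl hab)⟩
  · exact Or.inr ⟨ha, h.symm.mem_of_adj hS₂ hR₁ ⟨hR₂ ha, haS⟩ (union_comm R₁ R₂ ▸ hb) (Or.inl hab)⟩

end Separates

lemma isInducedDirCycle_of_adj_mem_cycleArcs {E : V → V → Prop} {k : ℕ} {f : ZMod k → V}
    (hf : Injective f) (h : ∀ s t, E (f s) (f t) → (f s, f t) ∈ cycleArcs f) :
    IsInducedDirCycle E k f := fun s t hst => by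
  obtain ⟨x, hx⟩ := h s t hst
  rw [Prod.mk.injEq] at hx
  rw [hf hx.1, hf hx.2]

section Restrict
variable {E : V → V → Prop} {A : Set V} {E₁ : A → A → Prop} {x y : V}
  (hE₁ : ∀ a b : A, E₁ a b ↔ E a b ∨ ((a : V) = x ∧ (b : V) = y)) {k : ℕ} {f : ZMod k → A}
include hE₁

lemma adj_of_mem_cycleArcs_coe (hf : ∀ t, E₁ (f t) (f (t + 1))) :
    ∀ p ∈ cycleArcs (fun t => (f t : V)) \ {(x, y)}, E p.1 p.2 := by
  rintro _ ⟨⟨t, rfl⟩, hne⟩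
  exact ((hE₁ _ _).1 (hf t)).resolve_right fun h => hne (Prod.ext h.1 h.2)

lemma adj_mem_cycleArcs_coe (hi : IsInducedDirCycle E₁ k f) :
    ∀ a ∈ range (fun t => (f t : V)), ∀ b ∈ range (fun t => (f t : V)),
      E a b → (a, b) ∈ cycleArcs (fun t => (f t : V)) := by
  rintro _ ⟨s, rfl⟩ _ ⟨t, rfl⟩ hst
  rw [hi s t ((hE₁ _ _).2 (Or.inl hst))]
  exact ⟨s, rfl⟩

lemma eq_of_adj_of_notMem_range_coe (hd : IsUndominatedDirCycle E₁ k f) :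
    ∀ w ∈ A, w ∉ range (fun t => (f t : V)) → ∀ a ∈ range (fun t => (f t : V)),
      ∀ b ∈ range (fun t => (f t : V)), E w a → E w b → a = b := by
  rintro w hwA hw _ ⟨s, rfl⟩ _ ⟨t, rfl⟩ hws hwt
  by_contra hne
  exact hd ⟨w, hwA⟩ (fun ⟨r, hr⟩ => hw ⟨r, congrArg Subtype.val hr⟩)
    ⟨s, t, fun h => hne (congrArg Subtype.val h), (hE₁ _ _).2 (Or.inl hws),
      (hE₁ _ _).2 (Or.inl hwt)⟩

end Restrict

section Stitch
variable {E : V → V → Prop} {u v : V} {A B : Set V} {k k₁ k₂ : ℕ} {f : ZMod k → V}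
  {g₁ : ZMod k₁ → V} {g₂ : ZMod k₂ → V}

lemma isInducedDirCycle_stitch (hf : Injective f) (hsep : Separates E {u, v} A B)
    (hR₁ : range g₁ ⊆ A) (hR₂ : range g₂ ⊆ B) (hS₁ : {u, v} ⊆ range g₁) (hS₂ : {u, v} ⊆ range g₂)
    (hrange : range f = range g₁ ∪ range g₂)
    (harcs : cycleArcs f = cycleArcs g₁ \ {(u, v)} ∪ cycleArcs g₂ \ {(v, u)})
    (hi₁ : ∀ a ∈ range g₁, ∀ b ∈ range g₁, E a b → (a, b) ∈ cycleArcs g₁)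
    (hi₂ : ∀ a ∈ range g₂, ∀ b ∈ range g₂, E a b → (a, b) ∈ cycleArcs g₂)
    (huv : ¬ E u v) (hvu : ¬ E v u) : IsInducedDirCycle E k f := by
  refine isInducedDirCycle_of_adj_mem_cycleArcs hf fun s t hst => ?_
  rw [harcs]
  rcases hsep.adj_mem_same_side hR₁ hR₂ hS₁ hS₂ (hrange ▸ mem_range_self s)
    (hrange ▸ mem_range_self t) hst with ⟨hs, ht⟩ | ⟨hs, ht⟩
  · refine Or.inl ⟨hi₁ _ hs _ ht hst, fun h => huv ?_⟩
    obtain ⟨rfl, rfl⟩ := Prod.mk.inj h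
    exact hst
  · refine Or.inr ⟨hi₂ _ hs _ ht hst, fun h => hvu ?_⟩
    obtain ⟨rfl, rfl⟩ := Prod.mk.inj h
    exact hst

lemma isUndominatedDirCycle_stitch (hsep : Separates E {u, v} A B) (hcover : A ∪ B = univ)
    (hR₁ : range g₁ ⊆ A) (hR₂ : range g₂ ⊆ B) (hS₁ : {u, v} ⊆ range g₁) (hS₂ : {u, v} ⊆ range g₂)
    (hrange : range f = range g₁ ∪ range g₂)
    (hd₁ : ∀ w ∈ A, w ∉ range g₁ → ∀ a ∈ range g₁, ∀ b ∈ range g₁, E w a → E w b → a = b)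
    (hd₂ : ∀ w ∈ B, w ∉ range g₂ → ∀ a ∈ range g₂, ∀ b ∈ range g₂, E w a → E w b → a = b) :
    IsUndominatedDirCycle E k f := by
  rintro w hw ⟨s, t, hst, hws, hwt⟩
  rw [hrange] at hw
  have hwS : w ∉ ({u, v} : Set V) := fun h => hw (Or.inl (hS₁ h))
  have hs : f s ∈ range g₁ ∪ range g₂ := hrange ▸ mem_range_self s
  have ht : f t ∈ range g₁ ∪ range g₂ := hrange ▸ mem_range_self t
  rcases (hcover.symm ▸ mem_univ w : w ∈ A ∪ B) with hwA | hwB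
  · exact hst (hd₁ w hwA (fun h => hw (Or.inl h))
      _ (hsep.mem_of_adj hS₁ hR₂ ⟨hwA, hwS⟩ hs (Or.inl hws))
      _ (hsep.mem_of_adj hS₁ hR₂ ⟨hwA, hwS⟩ ht (Or.inl hwt)) hws hwt)
  · rw [union_comm] at hs ht
    exact hst (hd₂ w hwB (fun h => hw (Or.inr h))
      _ (hsep.symm.mem_of_adj hS₂ hR₁ ⟨hwB, hwS⟩ hs (Or.inl hws))
      _ (hsep.symm.mem_of_adj hS₂ hR₁ ⟨hwB, hwS⟩ ht (Or.inl hwt)) hws hwt)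

end Stitch

end

theorem stitch_two_undominated_induced_cycles_general
    {V : Type*} (E : V → V → Prop) (u v : V)
    (hns1 : ¬ E u v) (hns2 : ¬ E v u)
    (A B : Set V) (hcover : A ∪ B = Set.univ) (hinter : A ∩ B = {u, v})
    (hsep : ∀ a ∈ A \ {u, v}, ∀ b ∈ B \ {u, v}, ¬ E a b ∧ ¬ E b a)
    -- the two augmented digraphs
    (E1 : A → A → Prop) (hE1 : ∀ a b : A, E1 a b ↔ (E a b ∨ ((a : V) = u ∧ (b : V) = v)))
    (E2 : B → B → Prop) (hE2 : ∀ a b : B, E2 a b ↔ (E a b ∨ ((a : V) = v ∧ (b : V) = u)))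
    (k1 k2 : ℕ) (f1 : ZMod k1 → A) (f2 : ZMod k2 → B)
    (hc1 : IsDirCycle E1 k1 f1) (hi1 : IsInducedDirCycle E1 k1 f1)
    (hd1 : IsUndominatedDirCycle E1 k1 f1)
    (hpass1 : ∃ t : ZMod k1, (f1 t : V) = u ∧ (f1 (t + 1) : V) = v)
    (hc2 : IsDirCycle E2 k2 f2) (hi2 : IsInducedDirCycle E2 k2 f2)
    (hd2 : IsUndominatedDirCycle E2 k2 f2)
    (hpass2 : ∃ t : ZMod k2, (f2 t : V) = v ∧ (f2 (t + 1) : V) = u) :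
    ∃ (k : ℕ) (f : ZMod k → V),
      IsDirCycle E k f ∧ IsInducedDirCycle E k f ∧ IsUndominatedDirCycle E k f ∧
      Set.range (fun t => f t) =
        ((fun a : A => (a : V)) '' Set.range f1) ∪ ((fun b : B => (b : V)) '' Set.range f2) ∧
      {p : V × V | ∃ t : ZMod k, p = (f t, f (t + 1))} =
        ({p : V × V | ∃ t : ZMod k1, p = ((f1 t : V), (f1 (t + 1) : V))} \ {(u, v)}) ∪
        ({p : V × V | ∃ t : ZMod k2, p = ((f2 t : V), (f2 (t + 1) : V))} \ {(v, u)}) := by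
  obtain ⟨hk1, hinj1, harc1⟩ := hc1
  obtain ⟨hk2, hinj2, harc2⟩ := hc2
  obtain ⟨t1, ht1, ht1'⟩ := hpass1
  obtain ⟨t2, ht2, ht2'⟩ := hpass2
  have hR1 : range (fun t => (f1 t : V)) ⊆ A := range_subset_iff.2 fun t => (f1 t).2
  have hR2 : range (fun t => (f2 t : V)) ⊆ B := range_subset_iff.2 fun t => (f2 t).2
  have hS1 : {u, v} ⊆ range (fun t => (f1 t : V)) :=
    insert_subset ⟨t1, ht1⟩ (singleton_subset_iff.2 ⟨t1 + 1, ht1'⟩)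
  have hS2 : {u, v} ⊆ range (fun t => (f2 t : V)) :=
    insert_subset ⟨t2 + 1, ht2'⟩ (singleton_subset_iff.2 ⟨t2, ht2⟩)
  obtain ⟨f, hf, hrange, harcs⟩ := exists_splice_cycles (by omega) (by omega)
    (Subtype.val_injective.comp hinj1) (Subtype.val_injective.comp hinj2) ht1 ht1' ht2 ht2'
    (hinter ▸ inter_subset_inter hR1 hR2)
  refine ⟨_, f, ⟨by omega, hf, fun t => ?_⟩,
    isInducedDirCycle_stitch hf hsep hR1 hR2 hS1 hS2 hrange harcs
      (adj_mem_cycleArcs_coe hE1 hi1) (adj_mem_cycleArcs_coe hE2 hi2) hns1 hns2,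
    isUndominatedDirCycle_stitch hsep hcover hR1 hR2 hS1 hS2 hrange
      (eq_of_adj_of_notMem_range_coe hE1 hd1) (eq_of_adj_of_notMem_range_coe hE2 hd2),
    by rw [hrange, ← range_comp, ← range_comp], harcs⟩
  have harc : (f t, f (t + 1)) ∈ cycleArcs f := ⟨t, rfl⟩
  rcases harcs ▸ harc with h | h
  exacts [adj_of_mem_cycleArcs_coe hE1 harc1 _ h, adj_of_mem_cycleArcs_coe hE2 harc2 _ h]

/-- Stitching two undominated induced cycles at a separating pair `{u, v}`:
if `G₁` (the part of `G` on `A`, plus an extra arc `(u,v)`) has an undominated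
induced cycle `f₁` through `(u,v)`, and `G₂` (the part on `B`, plus an extra arc
`(v,u)`) has an undominated induced cycle `f₂` through `(v,u)`, then deleting the
two extra arcs and concatenating yields an undominated induced cycle of `G`,
namely a cycle whose vertices are those of `f₁` and `f₂` and whose arcs are the
arcs of `f₁` and `f₂` other than `(u,v)` and `(v,u)`. -/
theorem stitch_two_undominated_induced_cycles
    {V : Type*} (E : V → V → Prop) (u v : V) (huv : u ≠ v)
    (hns1 : ¬ E u v) (hns2 : ¬ E v u)
    (A B : Set V) (hcover : A ∪ B = Set.univ) (hinter : A ∩ B = {u, v})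
    (hsep : ∀ a ∈ A \ {u, v}, ∀ b ∈ B \ {u, v}, ¬ E a b ∧ ¬ E b a)
    -- the two augmented digraphs
    (E1 : A → A → Prop) (hE1 : ∀ a b : A, E1 a b ↔ (E a b ∨ ((a : V) = u ∧ (b : V) = v)))
    (E2 : B → B → Prop) (hE2 : ∀ a b : B, E2 a b ↔ (E a b ∨ ((a : V) = v ∧ (b : V) = u)))
    (k1 k2 : ℕ) (f1 : ZMod k1 → A) (f2 : ZMod k2 → B)
    (hc1 : IsDirCycle E1 k1 f1) (hi1 : IsInducedDirCycle E1 k1 f1)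
    (hd1 : IsUndominatedDirCycle E1 k1 f1)
    (hpass1 : ∃ t : ZMod k1, (f1 t : V) = u ∧ (f1 (t + 1) : V) = v)
    (hc2 : IsDirCycle E2 k2 f2) (hi2 : IsInducedDirCycle E2 k2 f2)
    (hd2 : IsUndominatedDirCycle E2 k2 f2)
    (hpass2 : ∃ t : ZMod k2, (f2 t : V) = v ∧ (f2 (t + 1) : V) = u) :
    ∃ (k : ℕ) (f : ZMod k → V),
      IsDirCycle E k f ∧ IsInducedDirCycle E k f ∧ IsUndominatedDirCycle E k f ∧
      Set.range (fun t => f t) =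
        ((fun a : A => (a : V)) '' Set.range f1) ∪ ((fun b : B => (b : V)) '' Set.range f2) ∧
      {p : V × V | ∃ t : ZMod k, p = (f t, f (t + 1))} =
        ({p : V × V | ∃ t : ZMod k1, p = ((f1 t : V), (f1 (t + 1) : V))} \ {(u, v)}) ∪
        ({p : V × V | ∃ t : ZMod k2, p = ((f2 t : V), (f2 (t + 1) : V))} \ {(v, u)}) :=
  stitch_two_undominated_induced_cycles_general E u v hns1 hns2 A B hcover hinter hsep E1 hE1 E2 hE2
    k1 k2 f1 f2 hc1 hi1 hd1 hpass1 hc2 hi2 hd2 hpass2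
end

section
/- In any orientation of V8, every directed cycle of length 4 is an induced cycle and is undominated. -/
/-- Adjacency in `V₈`, the four-rung Möbius ladder: `j` is adjacent to `j - 1`,
`j + 1` and `j + 4` (mod 8). -/
def V8Adj (i j : ZMod 8) : Prop := j = i + 1 ∨ i = j + 1 ∨ j = i + 4

/-- `E` is an orientation of `V₈`: for every pair of adjacent vertices exactly one
of the two arcs between them is present, and there are no arcs between non-adjacent
vertices. -/
def IsV8Orientation (E : ZMod 8 → ZMod 8 → Prop) : Prop :=
  (∀ i j, E i j → V8Adj i j) ∧ ∀ i j, V8Adj i j → (E i j ↔ ¬ E j i)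

/-!
`V₈` is the circulant graph on `ℤ/8ℤ` with jumps `{1, 4}`: it is triangle-free, and two
distinct vertices have at most two common neighbours. In a triangle-free graph the only edges
among the vertices of a 4-cycle are the cycle edges, so in an orientation the only arcs among
them are the cycle arcs. A vertex off a 4-cycle is not adjacent to two consecutive cycle
vertices (that would be a triangle), nor to two opposite ones, which already have the other two
cycle vertices as common neighbours.
-/

open SimpleGraph

theorem ZMod.eq_self_or_add_one_or_add_two_or_add_three (s t : ZMod 4) :
    t = s ∨ t = s + 1 ∨ t = s + 2 ∨ t = s + 3 := by
  revert s t; decide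

theorem ZMod.add_three_add_one (s : ZMod 4) : s + 3 + 1 = s := by
  revert s; decide

section Cycle

variable {V : Type*} {f : ZMod 4 → V}

theorem rel_cycle_four_of_rel_succ {R : V → V → Prop} (hf : ∀ t, R (f t) (f (t + 1)))
    (s : ZMod 4) :
    R (f (s + 1)) (f (s + 2)) ∧ R (f (s + 2)) (f (s + 3)) ∧ R (f (s + 3)) (f s) := by
  have h₁ : s + 1 + 1 = s + 2 := by ring
  have h₂ : s + 2 + 1 = s + 3 := by ring
  have h₃ := hf (s + 3)
  rw [ZMod.add_three_add_one] at h₃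
  exact ⟨h₁ ▸ hf (s + 1), h₂ ▸ hf (s + 2), h₃⟩

theorem isInducedDirCycle_of_asymm {k : ℕ} {E : V → V → Prop} {f : ZMod k → V}
    (hasymm : ∀ x y, E x y → ¬ E y x) (hf : ∀ t, E (f t) (f (t + 1)))
    (hchord : ∀ s t, E (f s) (f t) → t = s + 1 ∨ s = t + 1) : IsInducedDirCycle E k f := by
  intro s t hst
  rcases hchord s t hst with h | rfl
  · exact h
  · exact absurd (hf t) (hasymm _ _ hst)

namespace SimpleGraph

variable {G : SimpleGraph V}

theorem CliqueFree.not_adj_of_adj_of_adj (h : G.CliqueFree 3) {a b c : V} (hab : G.Adj a b)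
    (hbc : G.Adj b c) : ¬ G.Adj a c := by
  classical
  exact fun hac => h {a, b, c} (is3Clique_triple_iff.2 ⟨hab, hac, hbc⟩)

variable (hf : ∀ t, G.Adj (f t) (f (t + 1)))
include hf

theorem CliqueFree.eq_add_one_or_of_adj_cycle_four (h : G.CliqueFree 3) {s t : ZMod 4}
    (hst : G.Adj (f s) (f t)) : t = s + 1 ∨ s = t + 1 := by
  obtain ⟨h₁₂, -, -⟩ := rel_cycle_four_of_rel_succ hf s
  rcases ZMod.eq_self_or_add_one_or_add_two_or_add_three s t with rfl | rfl | rfl | rfl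
  · exact absurd rfl hst.ne
  · exact .inl rfl
  · exact absurd hst (h.not_adj_of_adj_of_adj (hf s) h₁₂)
  · exact .inr (ZMod.add_three_add_one s).symm

theorem eq_of_adj_of_adj_cycle_four (h : G.CliqueFree 3)
    (hcommon : ∀ ⦃v w x y z : V⦄, v ≠ w → G.Adj v x → G.Adj x w → G.Adj v y →
      G.Adj y w → G.Adj v z → G.Adj z w → x = y ∨ x = z ∨ y = z)
    (hinj : Function.Injective f) {u : V} (hu : u ∉ Set.range f) {s t : ZMod 4}
    (hs : G.Adj u (f s)) (ht : G.Adj u (f t)) : s = t := by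
  obtain ⟨h₁₂, h₂₃, h₃₀⟩ := rel_cycle_four_of_rel_succ hf s
  rcases ZMod.eq_self_or_add_one_or_add_two_or_add_three s t with rfl | rfl | rfl | rfl
  · rfl
  · exact absurd ht (h.not_adj_of_adj_of_adj hs (hf s))
  · have hoff : ∀ i, f i ≠ u := fun i hi => hu ⟨i, hi⟩
    have h02 : f s ≠ f (s + 2) := hinj.ne (left_ne_add.2 (by decide))
    exfalso
    rcases hcommon h02 (hf s) h₁₂ h₃₀.symm h₂₃.symm hs.symm ht with h13 | h1u | h3u
    · exact hinj.ne ((add_right_injective s).ne (by decide)) h13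
    · exact hoff _ h1u
    · exact hoff _ h3u
  · exact absurd hs (h.not_adj_of_adj_of_adj ht h₃₀)

end SimpleGraph

end Cycle

abbrev v8 : SimpleGraph (ZMod 8) := circulantGraph {1, 4}

instance : DecidableRel V8Adj := fun _ _ => inferInstanceAs (Decidable (_ ∨ _ ∨ _))

theorem v8Adj_iff_adj (i j : ZMod 8) : V8Adj i j ↔ v8.Adj i j := by
  revert i j; decide

theorem cliqueFree_three_v8 : v8.CliqueFree 3 := by
  intro s hs
  obtain ⟨a, b, c, hab, hac, hbc, -⟩ := is3Clique_iff.1 hs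
  simp only [← v8Adj_iff_adj] at hab hac hbc
  revert a b c; decide

set_option synthInstance.maxSize 2000 in
theorem v8_eq_of_common_neighbours {v w x y z : ZMod 8} (hvw : v ≠ w) (hvx : v8.Adj v x)
    (hxw : v8.Adj x w) (hvy : v8.Adj v y) (hyw : v8.Adj y w) (hvz : v8.Adj v z)
    (hzw : v8.Adj z w) : x = y ∨ x = z ∨ y = z := by
  simp only [← v8Adj_iff_adj] at hvx hxw hvy hyw hvz hzw
  revert v w x y z; decide

/-- In any orientation of `V₈`, every directed cycle of length 4 is an induced
cycle and is undominated. -/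
theorem v8_four_cycle_undominated_induced
    (E : ZMod 8 → ZMod 8 → Prop) (hE : IsV8Orientation E)
    (f : ZMod 4 → ZMod 8) (hf : IsDirCycle E 4 f) :
    IsInducedDirCycle E 4 f ∧ IsUndominatedDirCycle E 4 f := by
  obtain ⟨hEadj, hEasymm⟩ := hE
  obtain ⟨-, hinj, hcyc⟩ := hf
  have hEG : ∀ x y, E x y → v8.Adj x y := fun x y hxy => (v8Adj_iff_adj x y).1 (hEadj x y hxy)
  have hG : ∀ t, v8.Adj (f t) (f (t + 1)) := fun t => hEG _ _ (hcyc t)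
  refine ⟨isInducedDirCycle_of_asymm (fun x y hxy => (hEasymm x y (hEadj x y hxy)).1 hxy) hcyc
    fun s t hst => cliqueFree_three_v8.eq_add_one_or_of_adj_cycle_four hG (hEG _ _ hst), ?_⟩
  rintro u hu ⟨s, t, hst, hs, ht⟩
  exact hst (congrArg f (eq_of_adj_of_adj_cycle_four hG cliqueFree_three_v8
    (fun _ _ _ _ _ => v8_eq_of_common_neighbours) hinj hu (hEG _ _ hs) (hEG _ _ ht)))
end

section
/- If an orientation of V8 contains a directed cycle of length 6, then it also contains a directed cycle of length 4. -/
/-!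
Every hexagon of `V₈` is `i, i+1, i+2, i+6, i+5, i+4` for some `i`, so two of its opposite
vertices, `i+1` and `i+5`, are joined by a rung. Along a directed 6-cycle this rung, oriented
either way, closes one of the two halves of the hexagon into a directed 4-cycle. That every
hexagon has such a diagonal is a finite check over the closed 6-walks of `V₈`.
-/

instance (i j : ZMod 8) : Decidable (V8Adj i j) :=
  inferInstanceAs (Decidable (_ ∨ _ ∨ _))

-- Interleaving quantifiers and adjacencies lets `decide` enumerate walks, not all 8⁶ tuples.
theorem v8Adj_hexagon_has_diagonal : ∀ a b, V8Adj a b → ∀ c, V8Adj b c → ∀ d, V8Adj c d →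
    ∀ e, V8Adj d e → ∀ g, V8Adj e g → V8Adj g a → [a, b, c, d, e, g].Nodup →
    V8Adj a d ∨ V8Adj b e ∨ V8Adj c g := by
  decide

theorem exists_v8Adj_diagonal {f : ZMod 6 → ZMod 8} (hf : Function.Injective f)
    (hadj : ∀ t, V8Adj (f t) (f (t + 1))) : ∃ t, V8Adj (f t) (f (t + 3)) := by
  have hnodup : [f 0, f 1, f 2, f 3, f 4, f 5].Nodup := List.nodup_ofFn.mpr hf
  rcases v8Adj_hexagon_has_diagonal _ _ (hadj 0) _ (hadj 1) _ (hadj 2) _ (hadj 3) _ (hadj 4)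
    (hadj 5) hnodup with h | h | h
  exacts [⟨0, h⟩, ⟨1, h⟩, ⟨2, h⟩]

theorem IsV8Orientation.arc_or_arc {E : ZMod 8 → ZMod 8 → Prop} (hE : IsV8Orientation E)
    {i j : ZMod 8} (h : V8Adj i j) : E i j ∨ E j i := by
  have := hE.2 i j h
  tauto

namespace IsDirCycle

variable {V : Type*} {E : V → V → Prop}

/-- Follow the cycle `f` from `f t` through the vertices `f (t + idx s)`, jumping once, at `s₀`,
along a chord. -/
theorem shortcut {n k : ℕ} {f : ZMod n → V} (hf : IsDirCycle E n f) (hk : 3 ≤ k)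
    (t : ZMod n) {idx : ZMod k → ZMod n} (hidx : Function.Injective idx) (s₀ : ZMod k)
    (hstep : ∀ s ≠ s₀, idx (s + 1) = idx s + 1)
    (hchord : E (f (t + idx s₀)) (f (t + idx (s₀ + 1)))) :
    IsDirCycle E k fun s => f (t + idx s) := by
  refine ⟨hk, hf.2.1.comp ((add_right_injective t).comp hidx), fun s => ?_⟩
  by_cases hs : s = s₀
  · exact hs ▸ hchord
  · simpa [hstep s hs, add_assoc] using hf.2.2 (t + idx s)

theorem exists_four_cycle_of_diagonal {f : ZMod 6 → V} (hf : IsDirCycle E 6 f) (t : ZMod 6)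
    (h : E (f t) (f (t + 3)) ∨ E (f (t + 3)) (f t)) : ∃ g : ZMod 4 → V, IsDirCycle E 4 g := by
  rcases h with h | h
  · have hinj : Function.Injective (![0, 3, 4, 5] : ZMod 4 → ZMod 6) := by decide
    exact ⟨_, hf.shortcut (by norm_num) t hinj 0 (by decide) ((add_zero t).symm ▸ h)⟩
  · have hinj : Function.Injective (![0, 1, 2, 3] : ZMod 4 → ZMod 6) := by decide
    exact ⟨_, hf.shortcut (by norm_num) t hinj 3 (by decide) ((add_zero t).symm ▸ h)⟩

end IsDirCycle

/-- If an orientation of `V₈` contains a directed cycle of length 6, then it also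
contains a directed cycle of length 4. -/
theorem v8_six_cycle_gives_four_cycle
    (E : ZMod 8 → ZMod 8 → Prop) (hE : IsV8Orientation E)
    (f : ZMod 6 → ZMod 8) (hf : IsDirCycle E 6 f) :
    ∃ g : ZMod 4 → ZMod 8, IsDirCycle E 4 g := by
  obtain ⟨t, ht⟩ := exists_v8Adj_diagonal hf.2.1 fun t => hE.1 _ _ (hf.2.2 t)
  exact hf.exists_four_cycle_of_diagonal t (hE.arc_or_arc ht)
end

section
/- If an orientation of V8 contains a directed cycle of length 8 (a directed Hamiltonian cycle), then it also contains a directed cycle of length 5. -/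
/-! The Hamiltonian cycle `f` has a chord `f s — f (s + 4)`. Otherwise every edge of `V₈` joins
vertices whose positions on `f` differ by an odd amount (a difference of `±2` would close a
triangle, and `V₈` is triangle-free), so the parity of the position would be a proper
2-colouring of `V₈`; but `0, 1, 2, 3, 4` is a 5-cycle of `V₈`. Whichever way the chord is
oriented, it closes one of the two halves of `f` into a directed 5-cycle. -/

instance inst_s14 : DecidableRel V8Adj := fun _ _ => inferInstanceAs (Decidable (_ ∨ _ ∨ _))

theorem v8Adj_comm {i j : ZMod 8} : V8Adj i j ↔ V8Adj j i := by
  revert i j; decide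

theorem v8Adj_irrefl (i : ZMod 8) : ¬ V8Adj i i := by
  revert i; decide

theorem v8Adj_triangle_free {a b c : ZMod 8} (hab : V8Adj a b) (hbc : V8Adj b c) :
    ¬ V8Adj c a := by
  revert a b c; decide

theorem exists_v8Adj_ne_add_one (c : ZMod 8 → ZMod 2) : ∃ i j, V8Adj i j ∧ c j ≠ c i + 1 := by
  by_contra! hc
  have h01 := hc 0 1 (by decide)
  have h12 := hc 1 2 (by decide)
  have h23 := hc 2 3 (by decide)
  have h34 := hc 3 4 (by decide)
  have h40 := hc 4 0 (by decide)
  have h50 : (5 : ZMod 2) = 0 := by linear_combination -(h01 + h12 + h23 + h34 + h40)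
  exact absurd h50 (by decide)

theorem IsDirCycle.exists_isDirCycle_of_chord {V : Type*} {E : V → V → Prop} {n m : ℕ}
    {f : ZMod n → V} (hf : IsDirCycle E n f) (hm : 2 ≤ m) (hmn : m < n) (s : ZMod n)
    (hchord : E (f (s + m)) (f s)) : ∃ g : ZMod (m + 1) → V, IsDirCycle E (m + 1) g := by
  obtain ⟨hn, hinj, hstep⟩ := hf
  have : NeZero n := ⟨by omega⟩
  have : Fact (1 < m + 1) := ⟨by omega⟩
  refine ⟨fun t => f (s + t.val), by omega, fun a b hab => ?_, fun t => ?_⟩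
  · have hval : ((a.val : ℕ) : ZMod n) = b.val := add_left_cancel (hinj hab)
    rw [ZMod.natCast_eq_natCast_iff', Nat.mod_eq_of_lt (by linarith [ZMod.val_lt a]),
      Nat.mod_eq_of_lt (by linarith [ZMod.val_lt b])] at hval
    exact ZMod.val_injective _ hval
  · rcases (Nat.lt_succ_iff.mp (ZMod.val_lt t)).lt_or_eq with ht | ht
    · have : (t + 1).val = t.val + 1 := by
        have h1 : (1 : ZMod (m + 1)).val = 1 := ZMod.val_one _
        rw [ZMod.val_add_of_lt (by omega), h1]
      simpa only [this, Nat.cast_succ, add_assoc] using hstep (s + t.val)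
    · have : t + 1 = 0 := by
        rw [← ZMod.natCast_zmod_val t, ht, ← Nat.cast_succ, ZMod.natCast_self]
      simpa only [this, ht, ZMod.val_zero, Nat.cast_zero, add_zero] using hchord

theorem castHom_eq_one_of_v8Adj {f : ZMod 8 → ZMod 8} (hadj : ∀ t, V8Adj (f t) (f (t + 1)))
    (hanti : ∀ s, ¬ V8Adj (f s) (f (s + 4))) {a d : ZMod 8} (h : V8Adj (f a) (f (a + d))) :
    ZMod.castHom (by norm_num : 2 ∣ 8) (ZMod 2) d = 1 := by
  have h0 : d ≠ 0 := by
    rintro rfl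
    exact v8Adj_irrefl _ (by simpa using h)
  have h2 : d ≠ 2 := by
    rintro rfl
    have hbc : V8Adj (f (a + 1)) (f (a + 2)) := by
      simpa [add_assoc, one_add_one_eq_two] using hadj (a + 1)
    exact v8Adj_triangle_free (hadj a) hbc (v8Adj_comm.mp h)
  have h4 : d ≠ 4 := by
    rintro rfl
    exact hanti a h
  have h6 : d ≠ 6 := by
    rintro rfl
    have hca : V8Adj (f (a + 7)) (f a) := by
      simpa [add_assoc, show (7 + 1 : ZMod 8) = 0 by decide] using hadj (a + 7)
    have hbc : V8Adj (f (a + 6)) (f (a + 7)) := by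
      simpa [add_assoc, show (6 + 1 : ZMod 8) = 7 by decide] using hadj (a + 6)
    exact v8Adj_triangle_free hbc hca h
  clear h
  revert d
  decide

theorem exists_v8Adj_antipodal {f : ZMod 8 → ZMod 8} (hf : Function.Injective f)
    (hadj : ∀ t, V8Adj (f t) (f (t + 1))) : ∃ s, V8Adj (f s) (f (s + 4)) := by
  by_contra! hanti
  let parity := ZMod.castHom (by norm_num : 2 ∣ 8) (ZMod 2)
  let e := Equiv.ofBijective f (Finite.injective_iff_bijective.mp hf)
  obtain ⟨i, j, hij, hne⟩ := exists_v8Adj_ne_add_one (fun v => parity (e.symm v))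
  obtain ⟨a, rfl⟩ := e.surjective i
  obtain ⟨b, rfl⟩ := e.surjective j
  have hab : V8Adj (f a) (f (a + (b - a))) := by simpa [e] using hij
  apply hne
  rw [e.symm_apply_apply, e.symm_apply_apply, ← castHom_eq_one_of_v8Adj hadj hanti hab,
    ← map_add, add_sub_cancel]

/-- If an orientation of `V₈` contains a directed cycle of length 8 (a directed
Hamiltonian cycle), then it also contains a directed cycle of length 5. -/
theorem v8_eight_cycle_gives_five_cycle
    (E : ZMod 8 → ZMod 8 → Prop) (hE : IsV8Orientation E)
    (f : ZMod 8 → ZMod 8) (hf : IsDirCycle E 8 f) :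
    ∃ g : ZMod 5 → ZMod 8, IsDirCycle E 5 g := by
  obtain ⟨s, hs⟩ := exists_v8Adj_antipodal hf.2.1 fun t => hE.1 _ _ (hf.2.2 t)
  by_cases hback : E (f (s + 4)) (f s)
  · exact hf.exists_isDirCycle_of_chord (m := 4) (by norm_num) (by norm_num) s
      (by simpa using hback)
  · have hfwd : E (f s) (f (s + 4)) := (hE.2 _ _ hs).mpr hback
    refine hf.exists_isDirCycle_of_chord (m := 4) (by norm_num) (by norm_num) (s + 4) ?_
    simpa [add_assoc, show (4 + 4 : ZMod 8) = 0 by decide] using hfwd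
end

section
/- Every cycle of length 5 in the graph V8 has vertex set of the form {i, i+1, i+2, i+3, i+4} for some i ∈ ℤ/8ℤ; that is, if v0, v1, v2, v3, v4 are distinct vertices of ℤ/8ℤ with v_t adjacent to v_{t+1 (mod 5)} in V8 for all t, then there exists i ∈ ℤ/8ℤ with {v0, v1, v2, v3, v4} = {i, i+1, i+2, i+3, i+4}. -/
def v8Steps : Finset (ZMod 8) := {1, -1, 4}

theorem v8Adj_iff_sub_mem {i j : ZMod 8} : V8Adj i j ↔ j - i ∈ v8Steps := by
  simp only [V8Adj, v8Steps, Finset.mem_insert, Finset.mem_singleton, sub_eq_iff_eq_add']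
  grind

theorem Fintype.sum_sub_comp_add_right {G M : Type*} [AddGroup G] [Fintype G]
    [AddCommGroup M] (f : G → M) (a : G) : ∑ t, (f (t + a) - f t) = 0 := by
  rw [Finset.sum_sub_distrib, sub_eq_zero]
  exact Equiv.sum_comp (Equiv.addRight a) f

theorem exists_rung_of_odd_v8_cycle {n : ℕ} [NeZero n] (hn : Odd n)
    (f : ZMod n → ZMod 8) (hadj : ∀ t, V8Adj (f t) (f (t + 1))) : ∃ s, f (s + 1) = f s + 4 := by
  by_contra! hnone
  let φ := ZMod.castHom (show 2 ∣ 8 by norm_num) (ZMod 2)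
  have hodd : ∀ t, φ (f (t + 1)) - φ (f t) = 1 := by
    intro t
    rw [← map_sub]
    rcases hadj t with h | h | h
    · rw [h, add_sub_cancel_left, map_one]
    · rw [h, sub_add_cancel_left, map_neg, map_one]
      rfl
    · exact absurd h (hnone t)
  have hsum := Fintype.sum_sub_comp_add_right (φ ∘ f) 1
  simp only [Function.comp_apply, hodd, Finset.sum_const, Finset.card_univ, ZMod.card,
    nsmul_eq_mul, mul_one, ZMod.natCast_eq_zero_iff_even] at hsum
  exact Nat.not_even_iff_odd.mpr hn hsum

theorem v8_step_word_of_rung : ∀ b ∈ v8Steps, ∀ c ∈ v8Steps, ∀ d ∈ v8Steps, ∀ e ∈ v8Steps,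
    4 + b ≠ 0 → b + c ≠ 0 → c + d ≠ 0 → d + e ≠ 0 → e + 4 ≠ 0 → 4 + b + c + d + e = 0 →
    (b = 1 ∨ b = -1) ∧ c = b ∧ d = b ∧ e = b := by
  decide

theorem range_zmod_five {α : Type*} (g : ZMod 5 → α) :
    Set.range g = {g 0, g 1, g 2, g 3, g 4} := by
  ext x
  simp only [Set.mem_range, Set.mem_insert_iff, Set.mem_singleton_iff]
  constructor
  · rintro ⟨k, rfl⟩
    fin_cases k <;> tauto
  · rintro (h | h | h | h | h) <;> exact ⟨_, h.symm⟩

theorem v8_five_cycle_support_of_rung (g : ZMod 5 → ZMod 8) (hinj : Function.Injective g)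
    (hadj : ∀ t, V8Adj (g t) (g (t + 1))) (hrung : g 0 = g 4 + 4) :
    ∃ i : ZMod 8, Set.range g = {i, i + 1, i + 2, i + 3, i + 4} := by
  have hstep : ∀ t, g (t + 1) - g t ∈ v8Steps := fun t => v8Adj_iff_sub_mem.mp (hadj t)
  have hne : ∀ s t : ZMod 5, s ≠ t → g s - g t ≠ 0 :=
    fun s t h => sub_ne_zero.mpr (hinj.ne h)
  obtain ⟨hε, hc, hd, he⟩ := v8_step_word_of_rung
    (g 1 - g 0) (hstep 0) (g 2 - g 1) (hstep 1) (g 3 - g 2) (hstep 2) (g 4 - g 3) (hstep 3)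
    (fun h => hne 1 4 (by decide) (by linear_combination h + hrung))
    (fun h => hne 2 0 (by decide) (by linear_combination h))
    (fun h => hne 3 1 (by decide) (by linear_combination h))
    (fun h => hne 4 2 (by decide) (by linear_combination h))
    (fun h => hne 0 3 (by decide) (by linear_combination h + hrung))
    (by linear_combination -hrung)
  rw [range_zmod_five]
  rcases hε with h | h
  · refine ⟨g 0, ?_⟩
    rw [show g 1 = g 0 + 1 by linear_combination h,
      show g 2 = g 0 + 2 by linear_combination hc + 2 * h,
      show g 3 = g 0 + 3 by linear_combination hd + hc + 3 * h,
      show g 4 = g 0 + 4 by linear_combination he + hd + hc + 4 * h]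
  · refine ⟨g 4, ?_⟩
    rw [hrung, show g 1 = g 4 + 3 by linear_combination -he - hd - hc - 3 * h,
      show g 2 = g 4 + 2 by linear_combination -he - hd - 2 * h,
      show g 3 = g 4 + 1 by linear_combination -he - h]
    ext x
    simp only [Set.mem_insert_iff, Set.mem_singleton_iff]
    tauto

/-- Every cycle of length 5 in the graph `V₈` has vertex set of the form
`{i, i+1, i+2, i+3, i+4}` for some `i`. -/
theorem v8_five_cycle_support
    (f : ZMod 5 → ZMod 8) (hinj : Function.Injective f)
    (hadj : ∀ t : ZMod 5, V8Adj (f t) (f (t + 1))) :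
    ∃ i : ZMod 8, Set.range f = ({i, i + 1, i + 2, i + 3, i + 4} : Set (ZMod 8)) := by
  obtain ⟨s, hs⟩ := exists_rung_of_odd_v8_cycle (by decide) f hadj
  rw [← (Equiv.addLeft (s + 1)).surjective.range_comp f]
  refine v8_five_cycle_support_of_rung _ (hinj.comp (add_right_injective _)) (fun t => ?_) ?_
  · simpa only [Function.comp_apply, Equiv.coe_addLeft, add_assoc] using hadj (s + 1 + t)
  · simp only [Function.comp_apply, Equiv.coe_addLeft, add_zero, add_assoc,
      show (1 + 4 : ZMod 5) = 0 from rfl, hs]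
end
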